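/- Let 𝒫 = P₁ ∪ … ∪ P_k be a split plane configuration in ℙⁿ and let Γ ⊆ 𝒫 be a finite set. Let r ≥ 1. Then Γ satisfies CB(r) if and only if, for each i, the set Γ ∩ Pᵢ satisfies CB(r). -/

import Mathlib

/-!
A homogeneous form `F` of degree `r` vanishing on `Γ ∩ Pᵢ \ {x}` is turned into one vanishing
on `Γ \ {x}` by composing it with a linear projection onto `Pᵢ` whose kernel contains the span of
the other planes, which exists because the configuration is split. The composed form agrees with
`F` on `Pᵢ` and vanishes on the other planes since `r ≥ 1`, so `CB(r)` for `Γ` gives `F(x) = 0`.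
The converse holds for any `Γ` covered by the planes.
-/

open MvPolynomial

/-- A point of `ℙⁿ` over `k`, realized as the projectivization of `k^(n+1)`. -/
abbrev ProjSpace (k : Type*) [Field k] (n : ℕ) : Type _ :=
  Projectivization k (Fin (n + 1) → k)

/-- The projective linear subspace of `ℙⁿ` determined by a linear subspace
`W ⊆ k^(n+1)`, as a set of points. -/
def projSet {k : Type*} [Field k] {n : ℕ} (W : Submodule k (Fin (n + 1) → k)) :
    Set (ProjSpace k n) :=
  {x | x.rep ∈ W}

/-- The Cayley–Bacharach condition `CB(r)`: every homogeneous polynomial of degree `r`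
vanishing at all points of `Γ` except possibly one vanishes on all of `Γ`. -/
def IsCB {k : Type*} [Field k] {n : ℕ} (r : ℕ) (Γ : Set (ProjSpace k n)) : Prop :=
  ∀ F : MvPolynomial (Fin (n + 1)) k, F.IsHomogeneous r →
    ∀ x ∈ Γ, (∀ y ∈ Γ, y ≠ x → MvPolynomial.eval y.rep F = 0) →
      MvPolynomial.eval x.rep F = 0

/-- A plane configuration in `ℙⁿ`: a finite collection of distinct
positive-dimensional projective linear subspaces. -/
structure PlaneConfig (k : Type*) [Field k] (n : ℕ) where
  length : ℕ
  P : Fin length → Submodule k (Fin (n + 1) → k)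
  inj : Function.Injective P
  posdim : ∀ i, 2 ≤ Module.finrank k (P i)

namespace PlaneConfig

variable {k : Type*} [Field k] {n : ℕ}

/-- The dimension of a plane configuration: the sum of the (projective) dimensions
of its planes. -/
noncomputable def dim (C : PlaneConfig k n) : ℕ := ∑ i, (Module.finrank k (C.P i) - 1)

/-- The set of points of `ℙⁿ` lying on the configuration. -/
def points (C : PlaneConfig k n) : Set (ProjSpace k n) := ⋃ i, projSet (C.P i)

/-- A configuration is skew if its planes are pairwise (projectively) disjoint. -/
def Skew (C : PlaneConfig k n) : Prop := ∀ i j, i ≠ j → C.P i ⊓ C.P j = ⊥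

end PlaneConfig

theorem MvPolynomial.IsHomogeneous.exists_eval_eq_eval_linearMap
    {R σ : Type*} [CommSemiring R] [Fintype σ] [DecidableEq σ]
    {F : MvPolynomial σ R} {r : ℕ} (hF : F.IsHomogeneous r) (π : (σ → R) →ₗ[R] (σ → R)) :
    ∃ G : MvPolynomial σ R, G.IsHomogeneous r ∧ ∀ v, eval v G = eval (π v) F := by
  let linearForm (j : σ) : MvPolynomial σ R := ∑ l, C (π (Pi.single l 1) j) * X l
  refine ⟨MvPolynomial.aeval linearForm F, ?_, fun v => ?_⟩
  · simpa using hF.aeval linearForm fun j =>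
      IsHomogeneous.sum _ _ 1 fun l _ => isHomogeneous_C_mul_X _ _
  · have hform : (fun j => eval v (linearForm j)) = π v := by
      ext j
      have hsingle (l : σ) : (Pi.single l 1 : σ → R) = fun i => if l = i then 1 else 0 := by
        ext i; simp [Pi.single_apply, eq_comm]
      simp [linearForm, π.pi_apply_eq_sum_univ v, mul_comm, hsingle]
    rw [← hform, aeval_eq_bind₁]
    exact eval₂Hom_bind₁ _ _ _ _

theorem MvPolynomial.IsHomogeneous.eval_zero_of_ne_zero
    {R σ : Type*} [CommSemiring R] {F : MvPolynomial σ R} {r : ℕ} (hF : F.IsHomogeneous r)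
    (hr : r ≠ 0) : eval 0 F = 0 := by
  rw [eval_zero, constantCoeff_eq]
  exact hF.coeff_eq_zero (by simpa using hr.symm)

theorem Submodule.exists_linearMap_eqOn_of_disjoint {K V : Type*} [DivisionRing K]
    [AddCommGroup V] [Module K V] {W S : Submodule K V} (h : Disjoint W S) :
    ∃ π : V →ₗ[K] V, (∀ v ∈ W, π v = v) ∧ ∀ v ∈ S, π v = 0 := by
  obtain ⟨T, hST, hT⟩ := h.symm.exists_isCompl
  exact ⟨W.projection T hT.symm, fun v hv => projection_apply_of_mem_left _ hv,
    fun v hv => (projection_apply_eq_zero_iff _).2 (hST hv)⟩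

section CayleyBacharach

variable {k : Type*} [Field k] {n : ℕ}

theorem IsCB.inter_projSet {r : ℕ} (hr : r ≠ 0) {Γ : Set (ProjSpace k n)} (hΓ : IsCB r Γ)
    (W : Submodule k (Fin (n + 1) → k)) (π : (Fin (n + 1) → k) →ₗ[k] (Fin (n + 1) → k))
    (hπW : ∀ v ∈ W, π v = v) (hπΓ : ∀ x ∈ Γ \ projSet W, π x.rep = 0) :
    IsCB r (Γ ∩ projSet W) := by
  intro F hF x hx hvan
  obtain ⟨G, hG, hGF⟩ := hF.exists_eval_eq_eval_linearMap π
  have hGx := hΓ G hG x hx.1 fun y hy hyx => by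
    by_cases hyW : y ∈ projSet W
    · rw [hGF, hπW _ hyW]
      exact hvan y ⟨hy, hyW⟩ hyx
    · rw [hGF, hπΓ y ⟨hy, hyW⟩]
      exact hF.eval_zero_of_ne_zero hr
  rwa [hGF, hπW _ hx.2] at hGx

theorem isCB_of_forall_inter {ι : Type*} {r : ℕ} {Γ : Set (ProjSpace k n)}
    {A : ι → Set (ProjSpace k n)} (hΓ : Γ ⊆ ⋃ i, A i) (h : ∀ i, IsCB r (Γ ∩ A i)) :
    IsCB r Γ := by
  intro F hF x hx hvan
  obtain ⟨i, hi⟩ := Set.mem_iUnion.mp (hΓ hx)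
  exact h i F hF x ⟨hx, hi⟩ fun y hy hyx => hvan y hy.1 hyx

end CayleyBacharach

theorem split_config_general {k : Type*} [Field k] {n : ℕ} (r : ℕ) (hr : 1 ≤ r)
    (C : PlaneConfig k n)
    (hsplit : ∀ i, Disjoint (C.P i) (⨆ j ∈ ({i}ᶜ : Set (Fin C.length)), C.P j))
    (Γ : Set (ProjSpace k n)) (hsub : Γ ⊆ C.points) :
    IsCB r Γ ↔ ∀ i, IsCB r (Γ ∩ projSet (C.P i)) := by
  refine ⟨fun hΓ i => ?_, isCB_of_forall_inter hsub⟩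
  obtain ⟨π, hπP, hπS⟩ := Submodule.exists_linearMap_eqOn_of_disjoint (hsplit i)
  refine hΓ.inter_projSet (by omega) (C.P i) π hπP fun x ⟨hx, hxi⟩ => hπS _ ?_
  obtain ⟨j, hj⟩ := Set.mem_iUnion.mp (hsub hx)
  have hji : j ≠ i := by
    rintro rfl
    exact hxi hj
  exact Submodule.mem_iSup_of_mem j (Submodule.mem_iSup_of_mem hji hj)

/-- For `Γ` contained in a split plane configuration, `Γ` is `CB(r)` iff each part
`Γ ∩ Pᵢ` is `CB(r)` (for `r ≥ 1`). -/
theorem split_config {k : Type*} [Field k] [Infinite k] {n : ℕ} (r : ℕ) (hr : 1 ≤ r)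
    (C : PlaneConfig k n)
    (hsplit : ∀ i, Disjoint (C.P i) (⨆ j ∈ ({i}ᶜ : Set (Fin C.length)), C.P j))
    (Γ : Set (ProjSpace k n)) (hfin : Γ.Finite) (hsub : Γ ⊆ C.points) :
    IsCB r Γ ↔ ∀ i, IsCB r (Γ ∩ projSet (C.P i)) :=
  split_config_general r hr C hsplit Γ hsub
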